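/- arXiv:math/0507514 — 2 statements merged into one kernel-verified Lean document; each statement's English description precedes it below -/
import Mathlib

section
/- The quotient of the cactus group J_{n-1} by the normal subgroup generated by the elements b_{p,q,r,m} = σ_{p,q,r}⁻¹ σ_{p+r-q,r,m}⁻¹ σ_{p,q,m} (for 1 ≤ p ≤ q < r < m ≤ n-1) is isomorphic to the symmetric group S_{n-1}; consequently the pure cactus group Γ_n = ker(J_{n-1} → S_{n-1}) is generated by the conjugates of the elements b_{p,q,r,m}. -/
/-- Index set for the generators `s_{p,q}`, `1 ≤ p < q ≤ n`, of the cactus group `J_n`. -/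
def CactusIdx (n : ℕ) : Type := {pq : ℕ × ℕ // 1 ≤ pq.1 ∧ pq.1 < pq.2 ∧ pq.2 ≤ n}

/-- The defining relations of the cactus group `J_n`:
`s_{p,q}² = 1`; `s_{p,q}s_{m,r} = s_{m,r}s_{p,q}` for disjoint intervals; and
`s_{p,q}s_{m,r} = s_{p+q-r,p+q-m}s_{p,q}` for `[m,r] ⊆ [p,q]`. -/
def cactusRels (n : ℕ) : Set (FreeGroup (CactusIdx n)) :=
  {w | ∃ a : CactusIdx n, w = FreeGroup.of a * FreeGroup.of a} ∪
  {w | ∃ a b : CactusIdx n, (a.1.2 < b.1.1 ∨ b.1.2 < a.1.1) ∧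
    w = FreeGroup.of a * FreeGroup.of b * (FreeGroup.of a)⁻¹ * (FreeGroup.of b)⁻¹} ∪
  {w | ∃ a b c : CactusIdx n, a.1.1 ≤ b.1.1 ∧ b.1.2 ≤ a.1.2 ∧
    c.1 = (a.1.1 + a.1.2 - b.1.2, a.1.1 + a.1.2 - b.1.1) ∧
    w = FreeGroup.of a * FreeGroup.of b * (FreeGroup.of a)⁻¹ * (FreeGroup.of c)⁻¹}

/-- The cactus group `J_n`, presented by generators `s_{p,q}` and the above relations. -/
def CactusGroup (n : ℕ) : Type := PresentedGroup (cactusRels n)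

noncomputable instance (n : ℕ) : Group (CactusGroup n) :=
  inferInstanceAs (Group (PresentedGroup (cactusRels n)))

/-- The permutation of `ℕ` reversing the interval `[p,q]` and fixing all other points. -/
def intervalReversal (p q : ℕ) : Equiv.Perm ℕ :=
  Function.Involutive.toPerm (fun i => if p ≤ i ∧ i ≤ q then p + q - i else i)
    (by intro i; dsimp only; split_ifs with h1 h2 <;> omega)


namespace CQS

open Equiv Subgroup

lemma rev_apply (p q i : ℕ) :
    intervalReversal p q i = if p ≤ i ∧ i ≤ q then p + q - i else i := rfl

lemma rev_mul_self (p q : ℕ) : intervalReversal p q * intervalReversal p q = 1 := by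
  ext i
  simp only [Equiv.Perm.mul_apply, rev_apply, Equiv.Perm.one_apply]
  split_ifs <;> omega

lemma rev_inv (p q : ℕ) : (intervalReversal p q)⁻¹ = intervalReversal p q :=
  inv_eq_of_mul_eq_one_right (rev_mul_self p q)

lemma rev_eq_one {p q : ℕ} (h : q ≤ p) : intervalReversal p q = 1 := by
  ext i
  simp only [rev_apply, Equiv.Perm.one_apply]
  split_ifs <;> omega

variable (k : ℕ)

lemma phi_rels : ∀ r ∈ cactusRels k,
    FreeGroup.lift (fun a : CactusIdx k => intervalReversal a.1.1 a.1.2) r = 1 := by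
  rintro r (( ⟨a, rfl⟩ | ⟨a, b, hd, rfl⟩ ) | ⟨a, b, c, hab1, hab2, hc, rfl⟩) <;>
    simp only [map_mul, map_inv, FreeGroup.lift_apply_of]
  · exact rev_mul_self _ _
  · obtain ⟨⟨p, q⟩, hpq⟩ := a
    obtain ⟨⟨m, r⟩, hmr⟩ := b
    simp only at hd ⊢
    rw [rev_inv, rev_inv]
    ext i
    simp only [Equiv.Perm.mul_apply, rev_apply, Equiv.Perm.one_apply]
    split_ifs <;> omega
  · obtain ⟨⟨p, q⟩, hpq⟩ := a
    obtain ⟨⟨m, r⟩, hmr⟩ := b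
    obtain ⟨⟨c1, c2⟩, hcv⟩ := c
    simp only [Prod.mk.injEq] at hc hab1 hab2 ⊢
    obtain ⟨rfl, rfl⟩ := hc
    rw [rev_inv, rev_inv]
    ext i
    simp only [Equiv.Perm.mul_apply, rev_apply, Equiv.Perm.one_apply]
    simp only at hpq hmr hab1 hab2
    split_ifs <;> omega

noncomputable def phi : CactusGroup k →* Equiv.Perm ℕ :=
  PresentedGroup.toGroup (phi_rels k)

lemma phi_of (a : CactusIdx k) :
    phi k (PresentedGroup.of a) = intervalReversal a.1.1 a.1.2 :=
  PresentedGroup.toGroup.of (phi_rels k)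

end CQS

namespace CQS

open Equiv Subgroup

variable (k : ℕ)

noncomputable def sG (p q : ℕ) : CactusGroup k :=
  if h : 1 ≤ p ∧ p < q ∧ q ≤ k then PresentedGroup.of ⟨(p, q), h⟩ else 1

noncomputable def sigE (p q r : ℕ) : CactusGroup k :=
  sG k p r * sG k p q * sG k (q + 1) r

noncomputable def bE (p q r m : ℕ) : CactusGroup k :=
  (sigE k p q r)⁻¹ * (sigE k (p + r - q) r m)⁻¹ * sigE k p q m

noncomputable def bS : Set (CactusGroup k) :=
  {x | ∃ p q r m : ℕ, 1 ≤ p ∧ p ≤ q ∧ q < r ∧ r < m ∧ m ≤ k ∧ x = bE k p q r m}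

lemma mk_rel_one {r : FreeGroup (CactusIdx k)} (hr : r ∈ cactusRels k) :
    PresentedGroup.mk (cactusRels k) r = 1 := by
  have : r ∈ Subgroup.normalClosure (cactusRels k) := Subgroup.subset_normalClosure hr
  exact (QuotientGroup.eq_one_iff r).2 this

lemma sG_valid {p q : ℕ} (h : 1 ≤ p ∧ p < q ∧ q ≤ k) :
    sG k p q = PresentedGroup.of ⟨(p, q), h⟩ := dif_pos h

lemma sG_invalid {p q : ℕ} (h : ¬(1 ≤ p ∧ p < q ∧ q ≤ k)) : sG k p q = 1 := dif_neg h

lemma sG_mul_self (p q : ℕ) : sG k p q * sG k p q = 1 := by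
  by_cases h : 1 ≤ p ∧ p < q ∧ q ≤ k
  · rw [sG_valid k h]
    exact mk_rel_one k (Or.inl (Or.inl ⟨⟨(p, q), h⟩, rfl⟩))
  · rw [sG_invalid k h, one_mul]

lemma sG_inv (p q : ℕ) : (sG k p q)⁻¹ = sG k p q :=
  inv_eq_of_mul_eq_one_right (sG_mul_self k p q)

lemma sG_comm {p q m r : ℕ} (hd : q < m ∨ r < p) :
    sG k p q * sG k m r = sG k m r * sG k p q := by
  by_cases h1 : 1 ≤ p ∧ p < q ∧ q ≤ k
  · by_cases h2 : 1 ≤ m ∧ m < r ∧ r ≤ k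
    · rw [sG_valid k h1, sG_valid k h2]
      have := mk_rel_one k (Or.inl (Or.inr ⟨⟨(p, q), h1⟩, ⟨(m, r), h2⟩, hd, rfl⟩))
      have h3 : (PresentedGroup.mk (cactusRels k)) (FreeGroup.of ⟨(p, q), h1⟩ *
          FreeGroup.of ⟨(m, r), h2⟩ * (FreeGroup.of ⟨(p, q), h1⟩)⁻¹ *
          (FreeGroup.of ⟨(m, r), h2⟩)⁻¹) = 1 := this
      simp only [map_mul, map_inv] at h3
      exact commutatorElement_eq_one_iff_mul_comm.mp h3
    · rw [sG_invalid k h2, one_mul, mul_one]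
  · rw [sG_invalid k h1, one_mul, mul_one]

lemma sG_nest {p q m r : ℕ} (h1 : 1 ≤ p ∧ p < q ∧ q ≤ k) (h2 : 1 ≤ m ∧ m < r ∧ r ≤ k)
    (hsub1 : p ≤ m) (hsub2 : r ≤ q) :
    sG k p q * sG k m r = sG k (p + q - r) (p + q - m) * sG k p q := by
  have h3 : 1 ≤ p + q - r ∧ p + q - r < p + q - m ∧ p + q - m ≤ k := by omega
  rw [sG_valid k h1, sG_valid k h2, sG_valid k h3]
  have h4 := mk_rel_one k (Or.inr ⟨⟨(p, q), h1⟩, ⟨(m, r), h2⟩, ⟨(p + q - r, p + q - m), h3⟩,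
    hsub1, hsub2, rfl, rfl⟩)
  simp only [map_mul, map_inv] at h4
  have h5 : (PresentedGroup.of ⟨(p,q),h1⟩ * PresentedGroup.of ⟨(m,r),h2⟩ *
      (PresentedGroup.of (rels := cactusRels k) ⟨(p,q),h1⟩)⁻¹) *
      (PresentedGroup.of ⟨(p+q-r,p+q-m),h3⟩)⁻¹ = 1 := h4
  rw [mul_inv_eq_one] at h5
  rw [← h5]
  exact (inv_mul_cancel_right _ _).symm

lemma phi_sG {p q : ℕ} (hp : 1 ≤ p) (hq : q ≤ k) :
    phi k (sG k p q) = intervalReversal p q := by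
  by_cases h : 1 ≤ p ∧ p < q ∧ q ≤ k
  · rw [sG_valid k h]; exact phi_of k _
  · rw [sG_invalid k h, map_one, rev_eq_one (by omega)]

lemma phi_sigE {p q r : ℕ} (hp : 1 ≤ p) (hq : q ≤ k) (hr : r ≤ k) :
    phi k (sigE k p q r) =
      intervalReversal p r * intervalReversal p q * intervalReversal (q + 1) r := by
  simp only [sigE, map_mul, phi_sG k hp hq, phi_sG k hp hr, phi_sG k (by omega : 1 ≤ q + 1) hr]

lemma sig_apply {p q r : ℕ} (hp : 1 ≤ p) (hpq : p ≤ q) (hqr : q < r) (i : ℕ) :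
    (intervalReversal p r * intervalReversal p q * intervalReversal (q + 1) r) i =
      if p ≤ i ∧ i ≤ q then i + (r - q) else
      if q + 1 ≤ i ∧ i ≤ r then i + p - (q + 1) else i := by
  simp only [Equiv.Perm.mul_apply, rev_apply]
  split_ifs <;> omega

lemma rev_b {p q r m : ℕ} (hp : 1 ≤ p) (hpq : p ≤ q) (hqr : q < r) (hrm : r < m) :
    intervalReversal p m * intervalReversal p q * intervalReversal (q + 1) m =
      (intervalReversal (p + r - q) m * intervalReversal (p + r - q) r *
        intervalReversal (r + 1) m) *
      (intervalReversal p r * intervalReversal p q * intervalReversal (q + 1) r) := by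
  ext i
  rw [sig_apply hp hpq (by omega : q < m) i, Equiv.Perm.mul_apply,
    sig_apply hp hpq hqr i,
    sig_apply (by omega : 1 ≤ p + r - q) (by omega : p + r - q ≤ r) hrm]
  split_ifs <;> omega

lemma phi_bE {p q r m : ℕ} (hp : 1 ≤ p) (hpq : p ≤ q) (hqr : q < r) (hrm : r < m)
    (hm : m ≤ k) : phi k (bE k p q r m) = 1 := by
  have h1 := phi_sigE k hp (by omega : q ≤ k) (by omega : r ≤ k)
  have h2 := phi_sigE k (by omega : 1 ≤ p + r - q) (by omega : r ≤ k) hm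
  have h3 := phi_sigE k hp (by omega : q ≤ k) hm
  simp only [bE, map_mul, map_inv, h1, h2, h3]
  rw [rev_b hp hpq hqr hrm]
  group

lemma normalClosure_bS_le_ker : Subgroup.normalClosure (bS k) ≤ (phi k).ker := by
  apply Subgroup.normalClosure_le_normal
  rintro x ⟨p, q, r, m, hp, hpq, hqr, hrm, hm, rfl⟩
  exact MonoidHom.mem_ker.2 (phi_bE k hp hpq hqr hrm hm)

/-- The quotient of the cactus group by the normal closure of the `b` elements. -/
noncomputable abbrev Qt := CactusGroup k ⧸ Subgroup.normalClosure (bS k)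

noncomputable def pr : CactusGroup k →* Qt k := QuotientGroup.mk' _

lemma pr_surjective : Function.Surjective (pr k) := QuotientGroup.mk'_surjective _

noncomputable def fbar : Qt k →* Equiv.Perm ℕ :=
  QuotientGroup.lift _ (phi k) (normalClosure_bS_le_ker k)

lemma fbar_pr (x : CactusGroup k) : fbar k (pr k x) = phi k x := rfl

/-- `Ŝ p q`, the image of `s_{p,q}` in the quotient. -/
noncomputable def sQ (p q : ℕ) : Qt k := pr k (sG k p q)

lemma sQ_mul_self (p q : ℕ) : sQ k p q * sQ k p q = 1 := by
  rw [sQ, ← map_mul, sG_mul_self, map_one]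

lemma sQ_inv (p q : ℕ) : (sQ k p q)⁻¹ = sQ k p q :=
  inv_eq_of_mul_eq_one_right (sQ_mul_self k p q)

lemma sQ_comm {p q m r : ℕ} (hd : q < m ∨ r < p) :
    sQ k p q * sQ k m r = sQ k m r * sQ k p q := by
  rw [sQ, sQ, ← map_mul, ← map_mul, sG_comm k hd]

lemma sQ_invalid {p q : ℕ} (h : ¬(1 ≤ p ∧ p < q ∧ q ≤ k)) : sQ k p q = 1 := by
  rw [sQ, sG_invalid k h, map_one]

lemma sigE_quot (p q r : ℕ) :
    pr k (sigE k p q r) = sQ k p r * sQ k p q * sQ k (q + 1) r := by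
  simp only [sigE, map_mul, sQ]

lemma b_quot {p q r m : ℕ} (hp : 1 ≤ p) (hpq : p ≤ q) (hqr : q < r) (hrm : r < m)
    (hm : m ≤ k) :
    pr k (sigE k p q m) = pr k (sigE k (p + r - q) r m) * pr k (sigE k p q r) := by
  have hb : bE k p q r m ∈ Subgroup.normalClosure (bS k) :=
    Subgroup.subset_normalClosure ⟨p, q, r, m, hp, hpq, hqr, hrm, hm, rfl⟩
  have h1 : pr k (bE k p q r m) = 1 := (QuotientGroup.eq_one_iff _).2 hb
  simp only [bE, map_mul, map_inv] at h1
  have h3 := inv_eq_of_mul_eq_one_left h1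
  calc pr k (sigE k p q m) = (((pr k) (sigE k p q m))⁻¹)⁻¹ := (inv_inv _).symm
    _ = (((pr k) (sigE k p q r))⁻¹ * ((pr k) (sigE k (p + r - q) r m))⁻¹)⁻¹ := by rw [h3]
    _ = _ := by rw [mul_inv_rev, inv_inv, inv_inv]

lemma b_quot' {p q r m : ℕ} (hp : 1 ≤ p) (hpq : p ≤ q) (hqr : q < r) (hrm : r < m)
    (hm : m ≤ k) :
    sQ k p m * sQ k p q * sQ k (q + 1) m =
      (sQ k (p + r - q) m * sQ k (p + r - q) r * sQ k (r + 1) m) *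
      (sQ k p r * sQ k p q * sQ k (q + 1) r) := by
  have := b_quot k hp hpq hqr hrm hm
  rwa [sigE_quot, sigE_quot, sigE_quot] at this

lemma braid {i : ℕ} (hi : 1 ≤ i) (hk : i + 2 ≤ k) :
    sQ k i (i + 1) * sQ k (i + 1) (i + 2) * sQ k i (i + 1) =
      sQ k (i + 1) (i + 2) * sQ k i (i + 1) * sQ k (i + 1) (i + 2) := by
  -- instance of b relation with (p,q,r,m) = (i,i,i+1,i+2)
  have hb := b_quot' k hi (le_refl i) (by omega : i < i + 1) (by omega : i + 1 < i + 2) hk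
  -- degenerate generators
  rw [sQ_invalid k (p := i) (q := i) (by omega),
    sQ_invalid k (p := i + 1 + 1) (q := i + 2) (by omega),
    sQ_invalid k (p := i + (i+1) - i) (q := i + 1) (by omega),
    sQ_invalid k (p := i + 1) (q := i + 1) (by omega)] at hb
  simp only [mul_one, one_mul] at hb
  have hi2 : i + (i + 1) - i = i + 1 := by omega
  rw [hi2] at hb
  -- hb : sQ i (i+2) * sQ (i+1) (i+2) = sQ (i+1) (i+2) * sQ i (i+1)
  -- nesting relation : s_{i,i+2} s_{i+1,i+2} = s_{i,i+1} s_{i,i+2}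
  have hn : sQ k i (i + 2) * sQ k (i + 1) (i + 2) = sQ k i (i + 1) * sQ k i (i + 2) := by
    have := sG_nest k (p := i) (q := i + 2) (m := i + 1) (r := i + 2)
      ⟨hi, by omega, hk⟩ ⟨by omega, by omega, hk⟩ (by omega) (by omega)
    have h2 : i + (i + 2) - (i + 2) = i := by omega
    have h3 : i + (i + 2) - (i + 1) = i + 1 := by omega
    rw [h2, h3] at this
    simpa only [sQ, ← map_mul] using congrArg (pr k) this
  -- from hb and hn : sQ i (i+2) = s_{i,i+1} s_{i+1,i+2} s_{i,i+1} = s_{i+1,i+2} s_{i,i+1} s_{i+1,i+2}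
  have e1 : sQ k i (i + 2) = sQ k (i + 1) (i + 2) * sQ k i (i + 1) * sQ k (i + 1) (i + 2) := by
    calc sQ k i (i + 2)
        = sQ k i (i + 2) * (sQ k (i + 1) (i + 2) * sQ k (i + 1) (i + 2)) := by
          rw [sQ_mul_self, mul_one]
      _ = (sQ k i (i + 2) * sQ k (i + 1) (i + 2)) * sQ k (i + 1) (i + 2) := by group
      _ = sQ k (i + 1) (i + 2) * sQ k i (i + 1) * sQ k (i + 1) (i + 2) := by rw [hb]
  have e2 : sQ k i (i + 2) = sQ k i (i + 1) * sQ k (i + 1) (i + 2) * sQ k i (i + 1) := by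
    have hb2 : sQ k i (i + 1) * sQ k i (i + 2) = sQ k (i + 1) (i + 2) * sQ k i (i + 1) := by
      rw [← hn, hb]
    calc sQ k i (i + 2)
        = sQ k i (i + 1) * (sQ k i (i + 1) * sQ k i (i + 2)) := by
          rw [← mul_assoc, sQ_mul_self, one_mul]
      _ = sQ k i (i + 1) * (sQ k (i + 1) (i + 2) * sQ k i (i + 1)) := by rw [hb2]
      _ = sQ k i (i + 1) * sQ k (i + 1) (i + 2) * sQ k i (i + 1) := by group
  rw [← e1, ← e2]

lemma decomp {p R : ℕ} (hp : 1 ≤ p) (hpR : p + 1 < R) (hR : R ≤ k) :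
    sQ k p R = sQ k (p + 1) R * sQ k (p + 2) R * sQ k p (p + 1) * sQ k (p + 1) R := by
  have hb := b_quot' k hp (le_refl p) (by omega : p < p + 1) hpR hR
  rw [sQ_invalid k (p := p) (q := p) (by omega),
    sQ_invalid k (p := p + (p + 1) - p) (q := p + 1) (by omega),
    sQ_invalid k (p := p + 1) (q := p + 1) (by omega)] at hb
  simp only [mul_one, one_mul] at hb
  have h2 : p + (p + 1) - p = p + 1 := by omega
  rw [h2] at hb
  -- hb : sQ p R * sQ (p+1) R = sQ (p+1) R * sQ (p+2) R * sQ p (p+1)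
  calc sQ k p R
      = sQ k p R * sQ k (p + 1) R * sQ k (p + 1) R := by
        rw [mul_assoc, sQ_mul_self, mul_one]
    _ = sQ k (p + 1) R * sQ k (p + 2) R * sQ k p (p + 1) * sQ k (p + 1) R := by rw [hb]

/-! ### Closure by adjacent generators -/

noncomputable def adjSet : Set (Qt k) := {g | ∃ i, 1 ≤ i ∧ i + 1 ≤ k ∧ g = sQ k i (i + 1)}

lemma sQ_mem_closure (p q : ℕ) : sQ k p q ∈ Subgroup.closure (adjSet k) := by
  by_cases h : 1 ≤ p ∧ p < q ∧ q ≤ k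
  swap
  · rw [sQ_invalid k h]; exact one_mem _
  obtain ⟨hp, hpq, hq⟩ := h
  have main : ∀ d p q, 1 ≤ p → p < q → q ≤ k → q - p ≤ d →
      sQ k p q ∈ Subgroup.closure (adjSet k) := by
    intro d
    induction d with
    | zero => intro p q hp hpq hq hd; omega
    | succ d ih =>
      intro p q hp hpq hq hd
      by_cases hadj : q = p + 1
      · subst hadj
        exact Subgroup.subset_closure ⟨p, hp, hq, rfl⟩
      · have h1 : p + 1 < q := by omega
        rw [decomp k hp h1 hq]
        have m1 : sQ k (p + 1) q ∈ Subgroup.closure (adjSet k) :=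
          ih (p + 1) q (by omega) (by omega) hq (by omega)
        have m2 : sQ k (p + 2) q ∈ Subgroup.closure (adjSet k) := by
          by_cases h2 : p + 2 < q
          · exact ih (p + 2) q (by omega) h2 hq (by omega)
          · rw [sQ_invalid k (by omega)]; exact one_mem _
        have m3 : sQ k p (p + 1) ∈ Subgroup.closure (adjSet k) :=
          Subgroup.subset_closure ⟨p, hp, by omega, rfl⟩
        exact mul_mem (mul_mem (mul_mem m1 m2) m3) m1
  exact main (q - p) p q hp hpq hq le_rfl

lemma closure_adj_top : Subgroup.closure (adjSet k) = ⊤ := by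
  rw [eq_top_iff]
  intro x _
  obtain ⟨y, rfl⟩ := pr_surjective k x
  have hy : y ∈ (Subgroup.closure (adjSet k)).comap (pr k) := by
    refine PresentedGroup.generated_by (cactusRels k) _ ?_ y
    rintro ⟨⟨p, q⟩, hj⟩
    refine Subgroup.mem_comap.2 ?_
    show pr k (PresentedGroup.of _) ∈ _
    rw [← sG_valid k hj]
    exact sQ_mem_closure k p q
  exact hy

/-! ### The cycle permutations `v j m` and canonical products `V j m` -/

def vP (j m : ℕ) : Equiv.Perm ℕ :=
  if j < m then Equiv.swap j (j + 1) * vP (j + 1) m else 1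
termination_by m - j

lemma vP_stop {j m : ℕ} (h : ¬ j < m) : vP j m = 1 := by rw [vP, if_neg h]

lemma vP_step {j m : ℕ} (h : j < m) : vP j m = Equiv.swap j (j + 1) * vP (j + 1) m := by
  rw [vP, if_pos h]

lemma vP_apply (j m x : ℕ) :
    vP j m x = if x < j ∨ m < x then x else if x = m then j else x + 1 := by
  have main : ∀ d j m x, m - j ≤ d →
      vP j m x = if x < j ∨ m < x then x else if x = m then j else x + 1 := by
    intro d
    induction d with
    | zero =>
      intro j m x hd
      rw [vP_stop (by omega)]
      simp only [Equiv.Perm.one_apply]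
      split_ifs <;> omega
    | succ d ih =>
      intro j m x hd
      by_cases h : j < m
      · rw [vP_step h, Equiv.Perm.mul_apply, ih (j + 1) m x (by omega)]
        split_ifs <;> simp only [Equiv.swap_apply_def] <;>
          first | (split_ifs <;> omega) | omega
      · rw [vP_stop h]
        simp only [Equiv.Perm.one_apply]
        split_ifs <;> omega
  exact main (m - j) j m x le_rfl

noncomputable def VQ (j m : ℕ) : Qt k :=
  if j < m then sQ k j (j + 1) * VQ (j + 1) m else 1
termination_by m - j

lemma VQ_stop {j m : ℕ} (h : ¬ j < m) : VQ k j m = 1 := by rw [VQ, if_neg h]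

lemma VQ_step {j m : ℕ} (h : j < m) : VQ k j m = sQ k j (j + 1) * VQ k (j + 1) m := by
  rw [VQ, if_pos h]

/-- `T i` commutes with `V j m` if `i + 1 < j`. -/
lemma K0 {i j m : ℕ} (hij : i + 1 < j) :
    sQ k i (i + 1) * VQ k j m = VQ k j m * sQ k i (i + 1) := by
  have main : ∀ d j m, m - j ≤ d → i + 1 < j →
      sQ k i (i + 1) * VQ k j m = VQ k j m * sQ k i (i + 1) := by
    intro d
    induction d with
    | zero => intro j m hd hij; rw [VQ_stop k (by omega), one_mul, mul_one]
    | succ d ih =>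
      intro j m hd hij
      by_cases h : j < m
      · rw [VQ_step k h, ← mul_assoc, sQ_comm k (by omega : i + 1 < j ∨ j + 1 < i),
          mul_assoc, ih (j + 1) m (by omega) (by omega), mul_assoc]
      · rw [VQ_stop k h, one_mul, mul_one]
  exact main (m - j) j m le_rfl hij

/-- `T i * V j m = V j m * T (i-1)` for `j < i`, `i + 1 ≤ m`. -/
lemma K1 {i j m : ℕ} (hj : 1 ≤ j) (hji : j < i) (him : i + 1 ≤ m) (hm : m ≤ k) :
    sQ k i (i + 1) * VQ k j m = VQ k j m * sQ k (i - 1) i := by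
  have main : ∀ d j, 1 ≤ j → j < i → i = j + 1 + d →
      sQ k i (i + 1) * VQ k j m = VQ k j m * sQ k (i - 1) i := by
    intro d
    induction d with
    | zero =>
      intro j hj hji hie
      -- i = j + 1 : braid case
      subst hie
      rw [VQ_step k (by omega : j < m), VQ_step k (by omega : j + 1 < m)]
      have hb := braid k hj (by omega : j + 2 ≤ k)
      have hcomm := K0 k (i := j) (j := j + 2) (m := m) (by omega)
      have hj1 : j + 1 - 1 = j := by omega
      rw [hj1]
      calc sQ k (j+1) (j+2) * (sQ k j (j+1) * (sQ k (j+1) (j+2) * VQ k (j+2) m))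
          = (sQ k (j+1) (j+2) * sQ k j (j+1) * sQ k (j+1) (j+2)) * VQ k (j+2) m := by
            group
        _ = (sQ k j (j+1) * sQ k (j+1) (j+2) * sQ k j (j+1)) * VQ k (j+2) m := by
            rw [← hb]
        _ = sQ k j (j+1) * (sQ k (j+1) (j+2) * (sQ k j (j+1) * VQ k (j+2) m)) := by
            group
        _ = sQ k j (j+1) * (sQ k (j+1) (j+2) * (VQ k (j+2) m * sQ k j (j+1))) := by
            rw [hcomm]
        _ = _ := by group
    | succ d ih =>
      intro j hj hji hie
      calc sQ k i (i+1) * VQ k j m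
          = sQ k i (i+1) * (sQ k j (j+1) * VQ k (j+1) m) := by
            rw [← VQ_step k (by omega : j < m)]
        _ = sQ k j (j+1) * (sQ k i (i+1) * VQ k (j+1) m) := by
            rw [← mul_assoc, sQ_comm k (by omega : (i:ℕ) + 1 < j ∨ j + 1 < i), mul_assoc]
        _ = sQ k j (j+1) * (VQ k (j+1) m * sQ k (i-1) i) := by
            rw [ih (j + 1) (by omega) (by omega) (by omega)]
        _ = VQ k j m * sQ k (i-1) i := by
            rw [← mul_assoc, ← VQ_step k (by omega : j < m)]
  exact main (i - j - 1) j hj hji (by omega)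

lemma k0p {i j m : ℕ} (hij : i + 1 < j) :
    Equiv.swap i (i + 1) * vP j m = vP j m * Equiv.swap i (i + 1) := by
  ext x
  simp only [Equiv.Perm.mul_apply, vP_apply, Equiv.swap_apply_def]
  split_ifs <;> omega

lemma k1p {i j m : ℕ} (hj : 1 ≤ j) (hji : j < i) (him : i + 1 ≤ m) :
    Equiv.swap i (i + 1) * vP j m = vP j m * Equiv.swap (i - 1) i := by
  ext x
  simp only [Equiv.Perm.mul_apply, vP_apply, Equiv.swap_apply_def]
  split_ifs <;> omega

lemma k2p {j m : ℕ} (hjm : j < m) :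
    Equiv.swap j (j + 1) * vP j m = vP (j + 1) m := by
  rw [vP_step hjm, ← mul_assoc, Equiv.swap_mul_self, one_mul]

lemma vP_one (m : ℕ) : vP m m = 1 := vP_stop (by omega)

/-- `w` fixes every point outside `[1, b]`. -/
def Pfix (b : ℕ) (w : Equiv.Perm ℕ) : Prop := ∀ x, x < 1 ∨ b < x → w x = x

lemma Pfix_one (b : ℕ) : Pfix b 1 := fun _ _ => rfl

lemma Pfix_mul {b : ℕ} {v w : Equiv.Perm ℕ} (hv : Pfix b v) (hw : Pfix b w) :
    Pfix b (v * w) := fun x hx => by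
  rw [Equiv.Perm.mul_apply, hw x hx, hv x hx]

lemma Pfix_inv {b : ℕ} {w : Equiv.Perm ℕ} (hw : Pfix b w) : Pfix b w⁻¹ := fun x hx => by
  have := hw x hx
  exact Equiv.Perm.inv_eq_iff_eq.2 this.symm

lemma Pfix_bound {b : ℕ} {w : Equiv.Perm ℕ} (hw : Pfix b w) {x : ℕ} (h1 : 1 ≤ x)
    (h2 : x ≤ b) : 1 ≤ w x ∧ w x ≤ b := by
  by_contra hcon
  have hout : w x < 1 ∨ b < w x := by omega
  have h3 : w (w x) = w x := hw (w x) hout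
  have h4 : w x = x := w.injective h3
  omega

lemma Pfix_mono {b b' : ℕ} (hb : b ≤ b') {w : Equiv.Perm ℕ} (hw : Pfix b w) : Pfix b' w :=
  fun x hx => hw x (by omega)

/-- Canonical lift of a permutation supported on `[1, m]` to the quotient group. -/
noncomputable def CCq : ℕ → Equiv.Perm ℕ → Qt k
  | 0, _ => 1
  | (m + 1), w => VQ k (w (m + 1)) (m + 1) * CCq m ((vP (w (m + 1)) (m + 1))⁻¹ * w)

lemma CCq_succ (m : ℕ) (w : Equiv.Perm ℕ) :
    CCq k (m + 1) w = VQ k (w (m + 1)) (m + 1) *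
      CCq k m ((vP (w (m + 1)) (m + 1))⁻¹ * w) := rfl

lemma CCq_one : ∀ m, CCq k m 1 = 1 := by
  intro m
  induction m with
  | zero => rfl
  | succ m ih =>
    rw [CCq_succ, Equiv.Perm.one_apply, VQ_stop k (by omega), vP_one, inv_one, mul_one,
      ih, one_mul]

lemma key : ∀ m, m ≤ k → ∀ w, Pfix m w → ∀ i, 1 ≤ i → i + 1 ≤ m →
    sQ k i (i + 1) * CCq k m w = CCq k m (Equiv.swap i (i + 1) * w) := by
  intro m
  induction m with
  | zero => intro _ _ _ i _ h; omega
  | succ m ih =>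
    intro hmk w hw i hi him
    have hjb : 1 ≤ w (m + 1) ∧ w (m + 1) ≤ m + 1 := Pfix_bound hw (by omega) le_rfl
    set j := w (m + 1) with hjdef
    -- the truncated permutation
    have hvfix : ∀ x, x < 1 ∨ m + 1 < x → vP j (m + 1) x = x := by
      intro x hx
      rw [vP_apply]
      split_ifs <;> omega
    have hw' : Pfix m ((vP j (m + 1))⁻¹ * w) := by
      intro x hx
      rcases (by omega : x < 1 ∨ m + 1 < x ∨ x = m + 1) with hc | hc | hc
      · rw [Equiv.Perm.mul_apply, hw x (Or.inl hc)]
        exact Equiv.Perm.inv_eq_iff_eq.2 (hvfix x (Or.inl hc)).symm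
      · rw [Equiv.Perm.mul_apply, hw x (Or.inr hc)]
        exact Equiv.Perm.inv_eq_iff_eq.2 (hvfix x (Or.inr hc)).symm
      · subst hc
        rw [Equiv.Perm.mul_apply, ← hjdef]
        refine Equiv.Perm.inv_eq_iff_eq.2 ?_
        rw [vP_apply]
        split_ifs <;> omega
    rcases (by omega : i + 1 < j ∨ i = j ∨ i + 1 = j ∨ j < i) with hc | hc | hc | hc
    · -- case A : i + 1 < j, T i commutes past V j
      have hidx : (Equiv.swap i (i + 1) * w) (m + 1) = j := by
        rw [Equiv.Perm.mul_apply, ← hjdef, Equiv.swap_apply_def]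
        split_ifs <;> omega
      rw [CCq_succ, CCq_succ, hidx, ← hjdef]
      have hcomm : Commute (Equiv.swap i (i + 1)) (vP j (m + 1)) := k0p hc
      have hswap : (vP j (m + 1))⁻¹ * (Equiv.swap i (i + 1) * w) =
          Equiv.swap i (i + 1) * ((vP j (m + 1))⁻¹ * w) := by
        rw [← mul_assoc, ← hcomm.inv_right.eq, mul_assoc]
      rw [hswap, ← ih (by omega) _ hw' i hi (by omega), ← mul_assoc, ← mul_assoc,
        ← K0 k hc]
    · -- case B : i = j
      have hij : i < m + 1 := by omega
      have hidx : (Equiv.swap i (i + 1) * w) (m + 1) = i + 1 := by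
        rw [Equiv.Perm.mul_apply, ← hjdef, Equiv.swap_apply_def]
        split_ifs <;> omega
      rw [CCq_succ, CCq_succ, hidx, ← hjdef, ← hc]
      have hv : (vP (i + 1) (m + 1))⁻¹ * (Equiv.swap i (i + 1) * w) =
          (vP i (m + 1))⁻¹ * w := by
        rw [← mul_assoc]
        congr 1
        rw [← k2p hij, mul_inv_rev, Equiv.swap_inv, mul_assoc, Equiv.swap_mul_self,
          mul_one]
      have hK2 : sQ k i (i + 1) * VQ k i (m + 1) = VQ k (i + 1) (m + 1) := by
        rw [VQ_step k hij, ← mul_assoc, sQ_mul_self, one_mul]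
      rw [hv, ← mul_assoc, hK2]
    · -- case C : i + 1 = j
      have hij : i < m + 1 := by omega
      have hidx : (Equiv.swap i (i + 1) * w) (m + 1) = i := by
        rw [Equiv.Perm.mul_apply, ← hjdef, Equiv.swap_apply_def]
        split_ifs <;> omega
      rw [CCq_succ, CCq_succ, hidx, ← hjdef, ← hc]
      have hv : (vP i (m + 1))⁻¹ * (Equiv.swap i (i + 1) * w) =
          (vP (i + 1) (m + 1))⁻¹ * w := by
        rw [← mul_assoc]
        congr 1
        rw [vP_step hij, mul_inv_rev, Equiv.swap_inv, mul_assoc, Equiv.swap_mul_self,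
          mul_one]
      rw [hv, ← mul_assoc, ← VQ_step k hij]
    · -- case D : j < i
      have hidx : (Equiv.swap i (i + 1) * w) (m + 1) = j := by
        rw [Equiv.Perm.mul_apply, ← hjdef, Equiv.swap_apply_def]
        split_ifs <;> omega
      rw [CCq_succ, CCq_succ, hidx, ← hjdef]
      have hii : i - 1 + 1 = i := by omega
      have hv : (vP j (m + 1))⁻¹ * (Equiv.swap i (i + 1) * w) =
          Equiv.swap (i - 1) i * ((vP j (m + 1))⁻¹ * w) := by
        have h1 := k1p (i := i) hjb.1 hc him
        -- v⁻¹ * t_i = t_(i-1) * v⁻¹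
        have h2 : (vP j (m + 1))⁻¹ * Equiv.swap i (i + 1) =
            Equiv.swap (i - 1) i * (vP j (m + 1))⁻¹ := by
          rw [inv_mul_eq_iff_eq_mul, ← mul_assoc, ← h1, mul_assoc, mul_inv_cancel,
            mul_one]
        rw [← mul_assoc, h2, mul_assoc]
      have hihyp := ih (by omega) _ hw' (i - 1) (by omega) (by omega)
      rw [hii] at hihyp
      rw [hv, ← hihyp, ← mul_assoc, ← mul_assoc, ← K1 k hjb.1 hc him hmk]

/-! ### Every element equals the canonical lift of its permutation image -/

noncomputable def permFixSub : Subgroup (Equiv.Perm ℕ) where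
  carrier := {w | Pfix k w}
  one_mem' := Pfix_one k
  mul_mem' := fun hv hw => Pfix_mul hv hw
  inv_mem' := fun hw => Pfix_inv hw

lemma phi_pfix (y : CactusGroup k) : Pfix k (phi k y) := by
  have hy : y ∈ (permFixSub k).comap (phi k) := by
    refine PresentedGroup.generated_by (cactusRels k) _ ?_ y
    rintro ⟨⟨p, q⟩, hj⟩
    refine Subgroup.mem_comap.2 ?_
    show phi k (PresentedGroup.of _) ∈ _
    erw [phi_of]
    show Pfix k (intervalReversal p q)
    intro x hx
    rw [rev_apply]
    simp only at hj
    split_ifs <;> omega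
  exact hy

lemma fbar_pfix (g : Qt k) : Pfix k (fbar k g) := by
  obtain ⟨y, rfl⟩ := pr_surjective k g
  rw [fbar_pr]
  exact phi_pfix k y

lemma rev_adj (i : ℕ) : intervalReversal i (i + 1) = Equiv.swap i (i + 1) := by
  ext x
  rw [rev_apply, Equiv.swap_apply_def]
  split_ifs <;> omega

lemma fbar_sQ_adj {i : ℕ} (hi : 1 ≤ i) (hik : i + 1 ≤ k) :
    fbar k (sQ k i (i + 1)) = Equiv.swap i (i + 1) := by
  rw [sQ, fbar_pr, phi_sG k hi hik, rev_adj]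

lemma full (g : Qt k) : ∀ w, Pfix k w → g * CCq k k w = CCq k k (fbar k g * w) := by
  have hg : g ∈ Subgroup.closure (adjSet k) := by rw [closure_adj_top]; trivial
  refine Subgroup.closure_induction ?_ ?_ ?_ ?_ hg
  · rintro x ⟨i, hi, hik, rfl⟩ w hw
    rw [fbar_sQ_adj k hi hik]
    exact key k k le_rfl w hw i hi hik
  · intro w hw
    rw [one_mul, map_one, one_mul]
  · intro x y _ _ px py w hw
    rw [mul_assoc, py w hw, px _ (Pfix_mul (fbar_pfix k y) hw), map_mul, mul_assoc]
  · intro x _ px w hw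
    have h1 := px ((fbar k x)⁻¹ * w) (Pfix_mul (Pfix_inv (fbar_pfix k x)) hw)
    rw [← mul_assoc, mul_inv_cancel, one_mul] at h1
    rw [map_inv, ← h1, ← mul_assoc, inv_mul_cancel, one_mul]

lemma fbar_injective : Function.Injective (fbar k) := by
  refine (injective_iff_map_eq_one _).2 fun g hg => ?_
  have h1 := full k g 1 (Pfix_one k)
  rw [CCq_one, mul_one, hg, one_mul, CCq_one] at h1
  exact h1

lemma ker_phi : (phi k).ker = Subgroup.normalClosure (bS k) := by
  refine le_antisymm ?_ (normalClosure_bS_le_ker k)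
  intro x hx
  have h1 : fbar k (pr k x) = 1 := by rw [fbar_pr]; exact hx
  have h2 : pr k x = 1 := fbar_injective k (by rw [h1, map_one])
  exact (QuotientGroup.eq_one_iff x).1 h2

/-! ### The isomorphism with the symmetric group on `Fin k` -/

def equivFin : {x : ℕ // 1 ≤ x ∧ x ≤ k} ≃ Fin k where
  toFun x := ⟨x.1 - 1, by omega⟩
  invFun i := ⟨i.1 + 1, by omega⟩
  left_inv x := by ext; simp; omega
  right_inv i := by ext; simp

lemma fbar_iff (g : Qt k) : ∀ x, (1 ≤ x ∧ x ≤ k) ↔ (1 ≤ fbar k g x ∧ fbar k g x ≤ k) := by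
  intro x
  constructor
  · intro hx
    exact Pfix_bound (fbar_pfix k g) hx.1 hx.2
  · intro hx
    by_contra hcon
    have := fbar_pfix k g x (by omega)
    omega

noncomputable def PhiFin : Qt k →* Equiv.Perm (Fin k) :=
  MonoidHom.mk' (fun g => Equiv.permCongr (equivFin k)
    ((fbar k g).subtypePerm (fun x => (fbar_iff k g x).symm))) (by
      intro a b
      ext i
      simp only [Equiv.permCongr_apply, Equiv.Perm.subtypePerm_apply, map_mul,
        Equiv.Perm.mul_apply]
      congr 1
      simp only [Equiv.symm_apply_apply])

lemma PhiFin_val (g : Qt k) (i : Fin k) :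
    (PhiFin k g i).1 = fbar k g (i.1 + 1) - 1 := rfl

lemma PhiFin_injective : Function.Injective (PhiFin k) := by
  refine (injective_iff_map_eq_one _).2 fun g hg => ?_
  apply fbar_injective k
  rw [map_one]
  ext x
  by_cases hx : 1 ≤ x ∧ x ≤ k
  · have h1 : (PhiFin k g ⟨x - 1, by omega⟩).1 = x - 1 := by rw [hg]; rfl
    rw [PhiFin_val] at h1
    have h2 : x - 1 + 1 = x := by omega
    rw [h2] at h1
    have h3 := Pfix_bound (fbar_pfix k g) hx.1 hx.2
    simp only [Equiv.Perm.one_apply]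
    omega
  · simp only [Equiv.Perm.one_apply]
    exact fbar_pfix k g x (by omega)

lemma rev_swap_decomp {p q : ℕ} (hpq : p < q) :
    intervalReversal p q * intervalReversal (p + 1) (q - 1) = Equiv.swap p q := by
  ext x
  rw [Equiv.Perm.mul_apply, rev_apply, rev_apply, Equiv.swap_apply_def]
  split_ifs <;> omega

lemma PhiFin_swap {a b : Fin k} (hab : a.1 < b.1) :
    PhiFin k (sQ k (a.1 + 1) (b.1 + 1) * sQ k (a.1 + 2) b.1) = Equiv.swap a b := by
  have hq : b.1 + 1 ≤ k := b.2
  have hfb : fbar k (sQ k (a.1 + 1) (b.1 + 1) * sQ k (a.1 + 2) b.1) =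
      intervalReversal (a.1 + 1) (b.1 + 1) * intervalReversal (a.1 + 2) b.1 := by
    rw [map_mul, sQ, sQ, fbar_pr, fbar_pr, phi_sG k (by omega) hq,
      phi_sG k (by omega) (by omega)]
  ext i
  rw [Equiv.swap_apply_def, PhiFin_val, hfb, Equiv.Perm.mul_apply, rev_apply, rev_apply]
  split_ifs <;> simp_all [Fin.ext_iff] <;> omega

lemma PhiFin_surjective : Function.Surjective (PhiFin k) := by
  intro τ
  have h : τ ∈ (PhiFin k).range := by
    refine Equiv.Perm.swap_induction_on τ (one_mem _) ?_
    intro f x y hxy hf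
    refine mul_mem ?_ hf
    have hne : x.1 ≠ y.1 := fun h => hxy (Fin.ext h)
    rcases lt_or_gt_of_ne hne with hlt | hgt
    · exact ⟨_, PhiFin_swap k hlt⟩
    · rw [Equiv.swap_comm]
      exact ⟨_, PhiFin_swap k hgt⟩
  exact h

noncomputable def theIso : Qt k ≃* Equiv.Perm (Fin k) :=
  MulEquiv.ofBijective (PhiFin k) ⟨PhiFin_injective k, PhiFin_surjective k⟩

end CQS

variable (n : ℕ)

/-- The generator `s_{p,q}` of `J_{n-1}`, with the convention `s_{p,p} = 1` (and `1` for
out-of-range indices). -/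
noncomputable def sGen (p q : ℕ) : CactusGroup (n - 1) :=
  if h : 1 ≤ p ∧ p < q ∧ q ≤ n - 1 then PresentedGroup.of ⟨(p, q), h⟩ else 1

/-- `σ_{p,q,r} = s_{p,r} s_{p,q} s_{q+1,r}`. -/
noncomputable def sigmaElt (p q r : ℕ) : CactusGroup (n - 1) :=
  sGen n p r * sGen n p q * sGen n (q + 1) r

/-- `b_{p,q,r,m} = σ_{p,q,r}⁻¹ σ_{p+r-q,r,m}⁻¹ σ_{p,q,m}`. -/
noncomputable def bElt (p q r m : ℕ) : CactusGroup (n - 1) :=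
  (sigmaElt n p q r)⁻¹ * (sigmaElt n (p + r - q) r m)⁻¹ * sigmaElt n p q m

/-- The set of the elements `b_{p,q,r,m}` for `1 ≤ p ≤ q < r < m ≤ n-1`. -/
noncomputable def bSet : Set (CactusGroup (n - 1)) :=
  {x | ∃ p q r m : ℕ, 1 ≤ p ∧ p ≤ q ∧ q < r ∧ r < m ∧ m ≤ n - 1 ∧ x = bElt n p q r m}

lemma bSet_eq_bS : bSet n = CQS.bS (n - 1) := rfl

/-- The quotient of the cactus group `J_{n-1}` by the normal subgroup generated by the
elements `b_{p,q,r,m}` is isomorphic to the symmetric group `S_{n-1}`; consequently the pure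
cactus group `Γ_n = ker(J_{n-1} → S_{n-1})` is generated by the conjugates of the
`b_{p,q,r,m}` (i.e. equals the normal closure of their set). -/
theorem cactus_quotient_symmetric :
    Nonempty ((CactusGroup (n - 1) ⧸ Subgroup.normalClosure (bSet n)) ≃*
      Equiv.Perm (Fin (n - 1))) ∧
    ∀ f : CactusGroup (n - 1) →* Equiv.Perm ℕ,
      (∀ a : CactusIdx (n - 1), f (PresentedGroup.of a) = intervalReversal a.1.1 a.1.2) →
      f.ker = Subgroup.normalClosure (bSet n) := by
  constructor
  · rw [bSet_eq_bS]
    exact ⟨CQS.theIso (n - 1)⟩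
  · intro f hf
    have hfx : f = CQS.phi (n - 1) :=
      MonoidHom.ext fun x => PresentedGroup.toGroup.unique (CQS.phi_rels (n - 1)) f hf
    rw [hfx, CQS.ker_phi, bSet_eq_bS]
end

section
/- In the commutative ring H generated by elements Π_S (for S ⊆ {1,...,n}, |S| ≥ 2, with Π_S = 0 when |S| = 2) subject to the relations (Π_S − Π_{S∪T})(Π_T − Π_{S∪T}) = 0 whenever S∩T ∉ {∅, S, T}, the following consequences hold: (a) Π_{S∪T}^{|S|+1} = Π_{S∪T}^{|S|} Π_T for disjoint S, T; (b) Π_S^{|S|−1} = 0; and (c) for disjoint sets S₀, S₁, ..., S_k with union S and |Sᵢ| ≥ 3 for i ≥ 1, Π_S^{|S₀|+k−1} ∏_{1≤i≤k} (Π_{Sᵢ} − Π_S) = 0. -/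
open Finset

variable (n : ℕ)

/-- The variable `Π_S` in the polynomial ring, for `S ⊆ {1,…,n}` with `|S| ≥ 3`. -/
noncomputable def PiVar (S : Finset (Fin n)) : MvPolynomial {S : Finset (Fin n) // 3 ≤ S.card} ℤ :=
  if h : 3 ≤ S.card then MvPolynomial.X ⟨S, h⟩ else 0

/-- The ideal of Keel-type quadratic relations
`(Π_S − Π_{S∪T})(Π_T − Π_{S∪T}) = 0` for `S ∩ T ∉ {∅, S, T}`. -/
noncomputable def keelIdeal : Ideal (MvPolynomial {S : Finset (Fin n) // 3 ≤ S.card} ℤ) :=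
  Ideal.span {p | ∃ S T : Finset (Fin n), S ∩ T ≠ ∅ ∧ S ∩ T ≠ S ∧ S ∩ T ≠ T ∧
    p = (PiVar n S - PiVar n (S ∪ T)) * (PiVar n T - PiVar n (S ∪ T))}

/-- The class of `Π_S` in the quotient ring `H ≅ H^*(M̄_{0,n+1}(ℂ),ℤ)`
(with the convention `Π_S = 0` for `|S| = 2`). -/
noncomputable def PiCl (S : Finset (Fin n)) :
    MvPolynomial {S : Finset (Fin n) // 3 ≤ S.card} ℤ ⧸ keelIdeal n :=
  Ideal.Quotient.mk (keelIdeal n) (PiVar n S)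

lemma PiCl_small (S : Finset (Fin n)) (h : S.card < 3) : PiCl n S = 0 := by
  rw [PiCl, PiVar, dif_neg (by omega), map_zero]

lemma keel_rel (S T : Finset (Fin n)) (h1 : S ∩ T ≠ ∅) (h2 : S ∩ T ≠ S) (h3 : S ∩ T ≠ T) :
    (PiCl n S - PiCl n (S ∪ T)) * (PiCl n T - PiCl n (S ∪ T)) = 0 := by
  have hmem : (PiVar n S - PiVar n (S ∪ T)) * (PiVar n T - PiVar n (S ∪ T)) ∈ keelIdeal n :=
    Ideal.subset_span ⟨S, T, h1, h2, h3, rfl⟩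
  have := Ideal.Quotient.eq_zero_iff_mem.mpr hmem
  simpa only [PiCl, map_mul, map_sub] using this

lemma exchange (S W : Finset (Fin n)) (hWS : W ⊆ S) (hW2 : 2 ≤ W.card) (hWne : W ≠ S)
    (x : Fin n) (hx : x ∈ W) :
    (PiCl n S - PiCl n ((S \ W) ∪ {x})) * (PiCl n S - PiCl n W) = 0 := by
  have hint : W ∩ ((S \ W) ∪ {x}) = {x} := by
    ext a
    simp only [Finset.mem_inter, Finset.mem_union, Finset.mem_sdiff, Finset.mem_singleton]
    constructor
    · rintro ⟨haW, ⟨_, hnW⟩ | hax⟩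
      · exact absurd haW hnW
      · exact hax
    · rintro rfl; exact ⟨hx, Or.inr rfl⟩
  have hne : (S \ W).Nonempty := by
    obtain ⟨a, haS, haW⟩ := Finset.exists_of_ssubset (hWS.ssubset_of_ne hWne)
    exact ⟨a, Finset.mem_sdiff.mpr ⟨haS, haW⟩⟩
  have h1 : W ∩ ((S \ W) ∪ {x}) ≠ ∅ := by
    rw [hint]; exact Finset.singleton_ne_empty x
  have h2 : W ∩ ((S \ W) ∪ {x}) ≠ W := by
    rw [hint]; intro h
    have := Finset.card_singleton x ▸ congrArg Finset.card h
    omega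
  have h3 : W ∩ ((S \ W) ∪ {x}) ≠ (S \ W) ∪ {x} := by
    rw [hint]; intro h
    obtain ⟨a, ha⟩ := hne
    have haB : a ∈ (S \ W) ∪ {x} := Finset.mem_union_left _ ha
    rw [← h, Finset.mem_singleton] at haB
    subst haB
    exact (Finset.mem_sdiff.mp ha).2 hx
  have hu : W ∪ ((S \ W) ∪ {x}) = S := by
    ext a
    simp only [Finset.mem_union, Finset.mem_sdiff, Finset.mem_singleton]
    constructor
    · rintro (h | ⟨h, _⟩ | rfl)
      · exact hWS h
      · exact h
      · exact hWS hx
    · intro h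
      by_cases hw : a ∈ W
      · exact Or.inl hw
      · exact Or.inr (Or.inl ⟨h, hw⟩)
  have := keel_rel n W ((S \ W) ∪ {x}) h1 h2 h3
  rw [hu] at this
  linear_combination this

lemma exchange_pow (S W : Finset (Fin n)) (hWS : W ⊆ S) (hW2 : 2 ≤ W.card) (hWne : W ≠ S)
    (x : Fin n) (hx : x ∈ W) (m : ℕ) :
    PiCl n S ^ m * (PiCl n S - PiCl n W)
      = PiCl n ((S \ W) ∪ {x}) ^ m * (PiCl n S - PiCl n W) := by
  induction m with
  | zero => simp
  | succ m ih =>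
    have h := exchange n S W hWS hW2 hWne x hx
    rw [pow_succ, pow_succ]
    linear_combination PiCl n S * ih + PiCl n ((S \ W) ∪ {x}) ^ m * h

lemma nilp_aux (m : ℕ) : ∀ S : Finset (Fin n), S.card ≤ m → 2 ≤ S.card →
    PiCl n S ^ (S.card - 1) = 0 := by
  induction m with
  | zero => intro S h1 h2; omega
  | succ m ih =>
    intro S hle h2
    by_cases h3 : 3 ≤ S.card
    · obtain ⟨W, hWS, hW2⟩ := Finset.exists_subset_card_eq (s := S) (n := 2) (by omega)
      obtain ⟨x, hx⟩ : W.Nonempty := Finset.card_pos.mp (by omega)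
      set B := (S \ W) ∪ {x} with hB
      have hWne : W ≠ S := by intro h; rw [h] at hW2; omega
      have hxS : x ∉ S \ W := by simp [Finset.mem_sdiff, hx]
      have hBcard : B.card = S.card - 1 := by
        rw [hB, Finset.card_union_of_disjoint (Finset.disjoint_singleton_right.mpr hxS),
          Finset.card_sdiff_of_subset hWS, Finset.card_singleton, hW2]
        omega
      have hW0 : PiCl n W = 0 := PiCl_small n W (by omega)
      have hIH : PiCl n B ^ (B.card - 1) = 0 := ih B (by omega) (by omega)
      have hkey := exchange_pow n S W hWS (by omega) hWne x hx (S.card - 2)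
      have e1 : PiCl n B ^ (S.card - 2) = 0 := by
        rw [show S.card - 2 = B.card - 1 by omega, hIH]
      rw [hW0, sub_zero] at hkey
      calc PiCl n S ^ (S.card - 1) = PiCl n S ^ (S.card - 2) * PiCl n S := by
            rw [← pow_succ]; congr 1; omega
        _ = PiCl n B ^ (S.card - 2) * PiCl n S := by rw [← hkey]
        _ = 0 := by rw [e1, zero_mul]
    · have hS2 : S.card = 2 := by omega
      rw [PiCl_small n S (by omega), hS2]
      norm_num

lemma nilp (S : Finset (Fin n)) (h2 : 2 ≤ S.card) : PiCl n S ^ (S.card - 1) = 0 :=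
  nilp_aux n S.card S le_rfl h2

lemma partA (S T : Finset (Fin n)) (hd : Disjoint S T) :
    PiCl n (S ∪ T) ^ S.card * (PiCl n (S ∪ T) - PiCl n T) = 0 := by
  rcases Finset.eq_empty_or_nonempty S with hS | hS
  · subst hS; simp
  · have hcardU : (S ∪ T).card = S.card + T.card := Finset.card_union_of_disjoint hd
    by_cases hT2 : 2 ≤ T.card
    · -- use exchange with W = T inside U = S ∪ T
      obtain ⟨x, hx⟩ : T.Nonempty := Finset.card_pos.mp (by omega)
      have hTU : T ⊆ S ∪ T := Finset.subset_union_right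
      have hTne : T ≠ S ∪ T := by
        intro h
        obtain ⟨a, ha⟩ := hS
        have : a ∈ T := h ▸ Finset.mem_union_left _ ha
        exact (Finset.disjoint_left.mp hd ha) this
      have hsd : (S ∪ T) \ T = S := by
        rw [Finset.union_sdiff_right, Finset.sdiff_eq_self_of_disjoint hd]
      have hkey := exchange_pow n (S ∪ T) T hTU hT2 hTne x hx S.card
      rw [hsd] at hkey
      have hxS : x ∉ S := Finset.disjoint_right.mp hd hx
      have hBcard : (S ∪ {x}).card = S.card + 1 := by
        rw [Finset.card_union_of_disjoint (Finset.disjoint_singleton_right.mpr hxS),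
          Finset.card_singleton]
      have hB0 : PiCl n (S ∪ {x}) ^ S.card = 0 := by
        have := nilp n (S ∪ {x}) (by have := Finset.card_pos.mpr hS; omega)
        rwa [hBcard, Nat.add_sub_cancel] at this
      rw [hkey, hB0, zero_mul]
    · -- T small: Π_T = 0 and Π_U^{|S|+1} = 0
      have hT0 : PiCl n T = 0 := PiCl_small n T (by omega)
      rw [hT0, sub_zero, ← pow_succ]
      by_cases hU3 : 3 ≤ (S ∪ T).card
      · have hnil := nilp n (S ∪ T) (by omega)
        rw [show S.card + 1 = ((S ∪ T).card - 1) + (S.card + 1 - ((S ∪ T).card - 1)) by omega,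
          pow_add, hnil, zero_mul]
      · rw [PiCl_small n (S ∪ T) (by omega), zero_pow (by omega)]

lemma prod_sub_mul {R : Type*} [CommRing R] {ι : Type*} (s : Finset ι) (g : ι → R)
    (a b z : R) (h : (b - a) * z = 0) :
    (∏ i ∈ s, (g i - a)) * z = (∏ i ∈ s, (g i - b)) * z := by
  induction s using Finset.cons_induction with
  | empty => rfl
  | cons i s his ih =>
    rw [Finset.prod_cons, Finset.prod_cons]
    linear_combination (g i - a) * ih + (∏ j ∈ s, (g j - b)) * h

lemma partC_aux (k : ℕ) : ∀ (S0 : Finset (Fin n)) (Sf : Fin k → Finset (Fin n))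
    (S : Finset (Fin n)),
    S = S0 ∪ Finset.univ.sup Sf →
    (∀ i, Disjoint S0 (Sf i)) →
    (∀ i j, i ≠ j → Disjoint (Sf i) (Sf j)) →
    (∀ i, 3 ≤ (Sf i).card) →
    2 ≤ S0.card + k →
    PiCl n S ^ (S0.card + k - 1) * ∏ i, (PiCl n (Sf i) - PiCl n S) = 0 := by
  induction k with
  | zero =>
    intro S0 Sf S hS _ _ _ h2
    have : S = S0 := by simpa using hS
    subst this
    rw [Finset.univ_eq_empty, Finset.prod_empty, mul_one, Nat.add_zero]
    exact nilp n S (by omega)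
  | succ k ih =>
    intro S0 Sf S hS hd0 hdp h3 h2
    set W := Sf 0 with hW
    set Sf' : Fin k → Finset (Fin n) := fun i => Sf i.succ with hSf'
    have hd0W : ∀ a, a ∈ S0 → a ∉ W := fun a ha => Finset.disjoint_left.mp (hd0 0) ha
    have hdWi : ∀ (i : Fin k) (a : Fin n), a ∈ Sf' i → a ∉ W :=
      fun i a ha => Finset.disjoint_left.mp (hdp i.succ 0 (Fin.succ_ne_zero i)) ha
    have hmemS : ∀ a, a ∈ S ↔ a ∈ S0 ∨ a ∈ W ∨ ∃ i : Fin k, a ∈ Sf' i := by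
      intro a
      rw [hS]
      simp only [Finset.mem_union, Finset.mem_sup, Finset.mem_univ, true_and]
      rw [Fin.exists_fin_succ]
    have hWS : W ⊆ S := fun a ha => (hmemS a).mpr (Or.inr (Or.inl ha))
    have hSdW : S \ W = S0 ∪ Finset.univ.sup Sf' := by
      ext a
      simp only [Finset.mem_sdiff, hmemS a, Finset.mem_union, Finset.mem_sup,
        Finset.mem_univ, true_and]
      constructor
      · rintro ⟨h1 | h1 | h1, h2⟩
        · exact Or.inl h1
        · exact absurd h1 h2
        · exact Or.inr h1
      · rintro (h1 | ⟨i, hi⟩)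
        · exact ⟨Or.inl h1, hd0W a h1⟩
        · exact ⟨Or.inr (Or.inr ⟨i, hi⟩), hdWi i a hi⟩
    have hne : (S \ W).Nonempty := by
      rw [hSdW]
      rcases Nat.eq_zero_or_pos k with hk | hk
      · have : S0.Nonempty := Finset.card_pos.mp (by omega)
        exact this.mono Finset.subset_union_left
      · have h33 : 3 ≤ (Sf' ⟨0, hk⟩).card := h3 (⟨0, hk⟩ : Fin k).succ
        have h0 : (Sf' ⟨0, hk⟩).Nonempty := Finset.card_pos.mp (by omega)
        exact (h0.mono (Finset.le_sup (Finset.mem_univ _))).mono Finset.subset_union_right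
    have hW3 : 3 ≤ W.card := h3 0
    obtain ⟨x, hxW⟩ : W.Nonempty := Finset.card_pos.mp (by omega)
    set B := (S \ W) ∪ {x} with hBdef
    have hWneS : W ≠ S := by
      intro h
      rw [h, Finset.sdiff_self] at hne
      exact Finset.not_nonempty_empty hne
    -- exchange
    have hex := exchange_pow n S W hWS (by omega) hWneS x hxW (S0.card + k)
    -- relation between B and W
    have hBW : (PiCl n B - PiCl n S) * (PiCl n W - PiCl n S) = 0 := by
      have hint : B ∩ W = {x} := by
        ext a
        simp only [hBdef, Finset.mem_inter, Finset.mem_union, Finset.mem_sdiff,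
          Finset.mem_singleton]
        constructor
        · rintro ⟨⟨_, hnW⟩ | hax, haW⟩
          · exact absurd haW hnW
          · exact hax
        · rintro rfl; exact ⟨Or.inr rfl, hxW⟩
      have h1 : B ∩ W ≠ ∅ := by rw [hint]; exact Finset.singleton_ne_empty x
      have h2' : B ∩ W ≠ B := by
        rw [hint]; intro h
        obtain ⟨a, ha⟩ := hne
        have haB : a ∈ B := Finset.mem_union_left _ ha
        rw [← h, Finset.mem_singleton] at haB
        subst haB
        exact (Finset.mem_sdiff.mp ha).2 hxW
      have h3' : B ∩ W ≠ W := by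
        rw [hint]; intro h
        have := Finset.card_singleton x ▸ congrArg Finset.card h
        omega
      have hu : B ∪ W = S := by
        ext a
        simp only [hBdef, Finset.mem_union, Finset.mem_sdiff, Finset.mem_singleton]
        constructor
        · rintro ((⟨h, _⟩ | rfl) | h)
          · exact h
          · exact hWS hxW
          · exact hWS h
        · intro h
          by_cases hw : a ∈ W
          · exact Or.inr hw
          · exact Or.inl (Or.inl ⟨h, hw⟩)
      have := keel_rel n B W h1 h2' h3'
      rw [hu] at this
      linear_combination this
    -- rewrite product and exponent
    have hxS0 : x ∉ S0 := fun h => hd0W x h hxW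
    have hcardB0 : (S0 ∪ {x}).card = S0.card + 1 := by
      rw [Finset.card_union_of_disjoint (Finset.disjoint_singleton_right.mpr hxS0),
        Finset.card_singleton]
    -- IH applied to B
    have hIH := ih (S0 ∪ {x}) Sf' B ?_ ?_ ?_ ?_ ?_
    · rw [hcardB0] at hIH
      have hIH' : PiCl n B ^ (S0.card + k) * ∏ i, (PiCl n (Sf' i) - PiCl n B) = 0 := by
        rw [show S0.card + 1 + k - 1 = S0.card + k by omega] at hIH
        exact hIH
      -- kill lemma
      have hkill := prod_sub_mul (Finset.univ : Finset (Fin k)) (fun i => PiCl n (Sf' i))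
        (PiCl n S) (PiCl n B) (PiCl n W - PiCl n S) hBW
      rw [show S0.card + (k + 1) - 1 = S0.card + k by omega, Fin.prod_univ_succ]
      linear_combination (- ∏ i : Fin k, (PiCl n (Sf' i) - PiCl n S)) * hex
        + PiCl n B ^ (S0.card + k) * hkill
        + (PiCl n W - PiCl n S) * hIH'
    · -- B = (S0 ∪ {x}) ∪ sup Sf'
      rw [hBdef, hSdW]
      ext a
      simp only [Finset.mem_union, Finset.mem_singleton]
      tauto
    · intro i
      rw [Finset.disjoint_union_left]
      exact ⟨hd0 i.succ, Finset.disjoint_singleton_left.mpr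
        (Finset.disjoint_left.mp (hdp 0 i.succ (Fin.succ_ne_zero i).symm) hxW)⟩
    · exact fun i j hij => hdp i.succ j.succ (fun h => hij (Fin.succ_injective _ h))
    · exact fun i => h3 i.succ
    · omega

/-- Algebraic consequences of the quadratic relations:
(a) `Π_{S∪T}^{|S|+1} = Π_{S∪T}^{|S|} Π_T` for disjoint `S`, `T`;
(b) `Π_S^{|S|−1} = 0` (for `|S| ≥ 2`);
(c) for disjoint `S₀, S₁, …, S_k` with union `S` and `|Sᵢ| ≥ 3` for `i ≥ 1`,
`Π_S^{|S₀|+k−1} ∏_{1≤i≤k} (Π_{Sᵢ} − Π_S) = 0`. -/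
theorem keel_relations_consequences :
    (∀ S T : Finset (Fin n), Disjoint S T →
      PiCl n (S ∪ T) ^ (S.card + 1) = PiCl n (S ∪ T) ^ S.card * PiCl n T) ∧
    (∀ S : Finset (Fin n), 2 ≤ S.card → PiCl n S ^ (S.card - 1) = 0) ∧
    (∀ (k : ℕ) (Sf : Fin (k + 1) → Finset (Fin n)),
      (∀ i j, i ≠ j → Disjoint (Sf i) (Sf j)) →
      (∀ i : Fin k, 3 ≤ (Sf i.succ).card) →
      2 ≤ (Sf 0).card + k →
      PiCl n (Finset.univ.sup Sf) ^ ((Sf 0).card + k - 1) *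
          ∏ i : Fin k, (PiCl n (Sf i.succ) - PiCl n (Finset.univ.sup Sf)) = 0) := by
  refine ⟨fun S T hd => ?_, fun S h2 => nilp n S h2, fun k Sf hdis h3 h2 => ?_⟩
  · have h := partA n S T hd
    rw [pow_succ]
    linear_combination h
  · have hSeq : Finset.univ.sup Sf = Sf 0 ∪ Finset.univ.sup (fun i : Fin k => Sf i.succ) := by
        ext a
        simp only [Finset.mem_union, Finset.mem_sup, Finset.mem_univ, true_and]
        rw [Fin.exists_fin_succ]
    exact partC_aux n k (Sf 0) (fun i => Sf i.succ) (Finset.univ.sup Sf) hSeq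
      (fun i => hdis 0 i.succ (Fin.succ_ne_zero i).symm)
      (fun i j hij => hdis i.succ j.succ (fun h => hij (Fin.succ_injective _ h)))
      h3 h2
end
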